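/- Let s = n·ln(#𝒟)/ln q. If either #𝒟_M < (#𝒟)^M for some M ≥ 1, or 𝒟_∞ is not uniformly discrete, then ℰ^+_{w,s}(μ) = ∞. -/

import Mathlib

open MeasureTheory Set ENNReal NNReal

noncomputable section

/-- Points of `ℝⁿ` with the Euclidean norm. -/
abbrev Pt (n : ℕ) := EuclideanSpace ℝ (Fin n)

/-- The action of an `n × n` real matrix on Euclidean space. -/
def mapp {n : ℕ} (A : Matrix (Fin n) (Fin n) ℝ) (x : Pt n) : Pt n :=
  Matrix.toEuclideanLin A x

/-- A real matrix is expanding if all of its (complex) eigenvalues have modulus `> 1`. -/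
def IsExpandingMatrix {n : ℕ} (A : Matrix (Fin n) (Fin n) ℝ) : Prop :=
  ∀ μ ∈ spectrum ℂ (A.map (fun a => (a : ℂ))), 1 < ‖μ‖

/-- The diameter of a set with respect to the pseudo norm `w`. -/
def pdiam {n : ℕ} (w : Pt n → ℝ) (E : Set (Pt n)) : ℝ≥0∞ :=
  ⨆ (x ∈ E) (y ∈ E), ENNReal.ofReal (w (x - y))

/-- The `δ`-approximation of the `s`-dimensional pseudo Hausdorff measure. -/
def preHw {n : ℕ} (w : Pt n → ℝ) (s δ : ℝ) (E : Set (Pt n)) : ℝ≥0∞ :=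
  ⨅ (U : ℕ → Set (Pt n)) (_ : E ⊆ ⋃ i, U i)
    (_ : ∀ i, pdiam w (U i) ≤ ENNReal.ofReal δ), ∑' i, pdiam w (U i) ^ s

/-- The `s`-dimensional pseudo Hausdorff measure w.r.t. the pseudo norm `w`. -/
def Hw {n : ℕ} (w : Pt n → ℝ) (s : ℝ) (E : Set (Pt n)) : ℝ≥0∞ :=
  ⨆ (δ : ℝ) (_ : 0 < δ), preHw w s δ E

/-- Carathéodory measurability with respect to the outer measure `Hw w s`. -/
def HwMeasurable {n : ℕ} (w : Pt n → ℝ) (s : ℝ) (E : Set (Pt n)) : Prop :=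
  ∀ T : Set (Pt n), Hw w s T = Hw w s (T ∩ E) + Hw w s (T \ E)

/-- A pseudo norm associated with the expanding matrix `A`. -/
structure IsPseudoNorm {n : ℕ} (A : Matrix (Fin n) (Fin n) ℝ) (w : Pt n → ℝ) : Prop where
  continuous : Continuous w
  nonneg : ∀ x, 0 ≤ w x
  neg : ∀ x, w (-x) = w x
  eq_zero_iff : ∀ x, w x = 0 ↔ x = 0
  scaling : ∀ x, w (mapp A x) = |A.det| ^ ((1 : ℝ) / n) * w x
  quasi_triangle : ∃ β > (0 : ℝ), ∀ x y, w (x + y) ≤ β * max (w x) (w y)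
  comparable : ∃ C > (0 : ℝ), ∃ α₁ > (0 : ℝ), ∃ α₂ > (0 : ℝ),
    (∀ x : Pt n, 1 < ‖x‖ → C⁻¹ * ‖x‖ ^ α₁ ≤ w x ∧ w x ≤ C * ‖x‖ ^ α₂) ∧
    (∀ x : Pt n, ‖x‖ ≤ 1 → C⁻¹ * ‖x‖ ^ α₂ ≤ w x ∧ w x ≤ C * ‖x‖ ^ α₁)

/-- The map `f_d(x) = A⁻¹(x + d)` of the self-affine IFS. -/
def fIFS {n : ℕ} (A : Matrix (Fin n) (Fin n) ℝ) (d : Pt n) (x : Pt n) : Pt n :=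
  mapp A⁻¹ (x + d)

/-- The open set condition for the IFS `{f_d}_{d ∈ D}`. -/
def OSC {n : ℕ} (A : Matrix (Fin n) (Fin n) ℝ) (D : Finset (Pt n)) : Prop :=
  ∃ V : Set (Pt n), V.Nonempty ∧ IsOpen V ∧ Bornology.IsBounded V ∧
    (⋃ d ∈ D, fIFS A d '' V) ⊆ V ∧
    ∀ d ∈ D, ∀ d' ∈ D, d ≠ d' → fIFS A d '' V ∩ fIFS A d' '' V = ∅

/-- `K` is the self-affine set (attractor) for the pair `(A, D)`:
a nonempty compact set with `A K = ⋃_{d ∈ D} (K + d)`. -/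
def IsSelfAffineSet {n : ℕ} (A : Matrix (Fin n) (Fin n) ℝ) (D : Finset (Pt n))
    (K : Set (Pt n)) : Prop :=
  K.Nonempty ∧ IsCompact K ∧ mapp A '' K = ⋃ d ∈ D, (fun x => x + d) '' K

/-- The set `𝒟_M` of `M`-fold expansions `Σ_{j<M} A^j d_j`. -/
def DsetM {n : ℕ} (A : Matrix (Fin n) (Fin n) ℝ) (D : Finset (Pt n)) (M : ℕ) :
    Set (Pt n) :=
  {x | ∃ d : Fin M → Pt n, (∀ j, d j ∈ D) ∧ x = ∑ j : Fin M, mapp (A ^ (j : ℕ)) (d j)}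

/-- The set `𝒟_∞ = ⋃_{M ≥ 1} 𝒟_M`. -/
def DsetInf {n : ℕ} (A : Matrix (Fin n) (Fin n) ℝ) (D : Finset (Pt n)) : Set (Pt n) :=
  ⋃ (M : ℕ) (_ : 1 ≤ M), DsetM A D M

/-- A set is uniformly discrete if distinct points are uniformly separated. -/
def UniformlyDiscrete {n : ℕ} (S : Set (Pt n)) : Prop :=
  ∃ δ > (0 : ℝ), ∀ x ∈ S, ∀ y ∈ S, x ≠ y → δ < ‖x - y‖

/-- `σ` is the invariant (self-affine) probability measure of the IFS `{f_d}_{d ∈ D}`. -/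
def IsInvariantMeasure {n : ℕ} (A : Matrix (Fin n) (Fin n) ℝ) (D : Finset (Pt n))
    (σ : Measure (Pt n)) : Prop :=
  IsProbabilityMeasure σ ∧
  ∀ f : Pt n → ℝ, Continuous f → HasCompactSupport f →
    ∫ x, f x ∂σ = ((D.card : ℝ))⁻¹ * ∑ d ∈ D, ∫ x, f (fIFS A d x) ∂σ

/-- The measure `μ_M = Σ_{d_0,…,d_{M−1} ∈ 𝒟} δ_{d_0 + A d_1 + ⋯ + A^{M−1} d_{M−1}}`. -/
def muM {n : ℕ} (A : Matrix (Fin n) (Fin n) ℝ) (D : Finset (Pt n)) (M : ℕ) :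
    Measure (Pt n) :=
  ∑ d ∈ (Finset.univ : Finset (Fin M → {x : Pt n // x ∈ D})),
    Measure.dirac (∑ j : Fin M, mapp (A ^ (j : ℕ)) ((d j : Pt n)))

/-- Convolution of two Borel measures on `ℝⁿ`. -/
def mconv {n : ℕ} (μ ν : Measure (Pt n)) : Measure (Pt n) :=
  Measure.map (fun p : Pt n × Pt n => p.1 + p.2) (μ.prod ν)

/-- The upper `s`-density `ℰ⁺_{w,s}(ν)` of a Borel measure `ν` w.r.t. the pseudo norm `w`. -/
def upperDensity {n : ℕ} (w : Pt n → ℝ) (s : ℝ) (ν : Measure (Pt n)) : ℝ≥0∞ :=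
  ⨅ (r : ℝ) (_ : 0 < r),
    ⨆ (U : Set (Pt n)) (_ : IsCompact U) (_ : Convex ℝ U)
      (_ : ENNReal.ofReal r ≤ pdiam w U), ν U / pdiam w U ^ s

/-- The upper convex `s`-density `D^s_{w,c}(E, x)` of `E` at `x` w.r.t. `w`. -/
def upperConvexDensity {n : ℕ} (w : Pt n → ℝ) (s : ℝ) (E : Set (Pt n)) (x : Pt n) :
    ℝ≥0∞ :=
  ⨅ (r : ℝ) (_ : 0 < r),
    ⨆ (U : Set (Pt n)) (_ : Convex ℝ U) (_ : x ∈ U) (_ : 0 < pdiam w U)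
      (_ : pdiam w U ≤ ENNReal.ofReal r), Hw w s (E ∩ U) / pdiam w U ^ s

/-- The pseudo Hausdorff dimension `dim_H^w E = inf {s ≥ 0 : ℋ^s_w(E) = 0}`. -/
def dimHw {n : ℕ} (w : Pt n → ℝ) (E : Set (Pt n)) : ℝ≥0∞ :=
  ⨅ (t : ℝ≥0) (_ : Hw w (t : ℝ) E = 0), (t : ℝ≥0∞)

/-- `𝒱` is a Vitali class for `E` w.r.t. `w`. -/
def VitaliClass {n : ℕ} (w : Pt n → ℝ) (𝒱 : Set (Set (Pt n))) (E : Set (Pt n)) : Prop :=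
  ∀ x ∈ E, ∀ δ : ℝ, 0 < δ →
    ∃ U ∈ 𝒱, x ∈ U ∧ 0 < pdiam w U ∧ pdiam w U ≤ ENNReal.ofReal δ

/-- The composite map `f_𝐢 = f_{i₁} ∘ ⋯ ∘ f_{i_m}` associated with a word of digits. -/
def fWord {n : ℕ} (A : Matrix (Fin n) (Fin n) ℝ) (i : List (Pt n)) (x : Pt n) : Pt n :=
  i.foldr (fun d y => fIFS A d y) x


/-! Either hypothesis gives, for every `ε > 0`, two distinct digit strings of equal length whose
expansions are `ε`-close (when `𝒟_∞` is not uniformly discrete, pad the shorter string with the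
digit `0`). Concatenating `k` such pairs, each rescaled by the appropriate power of `A`, yields
`2 ^ k` distinct strings whose expansions lie in one ball of radius `ε`, so `μ` gives unbounded
mass to translates of a fixed ball. These translates all have the same positive, finite
`w`-diameter, hence the upper density is infinite. -/

open scoped Pointwise

variable {n : ℕ}

section PseudoDiameter

variable {w : Pt n → ℝ}

lemma le_pdiam {E : Set (Pt n)} {x y : Pt n} (hx : x ∈ E) (hy : y ∈ E) :
    ENNReal.ofReal (w (x - y)) ≤ pdiam w E :=
  le_iSup₂_of_le x hx (le_iSup₂_of_le y hy le_rfl)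

lemma pdiam_vadd (a : Pt n) (E : Set (Pt n)) : pdiam w (a +ᵥ E) = pdiam w E := by
  simp only [pdiam, ← Set.image_vadd, iSup_image, vadd_eq_add, add_sub_add_left_eq_sub]

lemma pdiam_closedBall (z : Pt n) (R : ℝ) :
    pdiam w (Metric.closedBall z R) = pdiam w (Metric.closedBall 0 R) := by
  rw [← vadd_closedBall_zero, pdiam_vadd]

lemma pdiam_closedBall_ne_top (hw : Continuous w) (z : Pt n) (R : ℝ) :
    pdiam w (Metric.closedBall z R) ≠ ⊤ := by
  obtain ⟨C, hC⟩ := (isCompact_closedBall (0 : Pt n) (2 * R)).exists_bound_of_continuousOn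
    hw.continuousOn
  refine ne_top_of_le_ne_top (ofReal_ne_top (r := C))
    (iSup₂_le fun x hx => iSup₂_le fun y hy => ?_)
  refine ofReal_le_ofReal ((le_abs_self _).trans (hC _ ?_))
  rw [mem_closedBall_zero_iff, ← dist_eq_norm]
  linarith [dist_triangle_right x y z, Metric.mem_closedBall.1 hx, Metric.mem_closedBall.1 hy]

end PseudoDiameter

open Filter in
lemma IsPseudoNorm.tendsto_cocompact_atTop {A : Matrix (Fin n) (Fin n) ℝ} {w : Pt n → ℝ}
    (hw : IsPseudoNorm A w) : Tendsto w (cocompact (Pt n)) atTop := by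
  obtain ⟨C, hC, α₁, hα₁, _, _, hlarge, _⟩ := hw.comparable
  have hpow : Tendsto (fun x : Pt n => C⁻¹ * ‖x‖ ^ α₁) (cocompact _) atTop :=
    ((_root_.tendsto_rpow_atTop hα₁).comp tendsto_norm_cocompact_atTop).const_mul_atTop
      (inv_pos.2 hC)
  refine tendsto_atTop_mono' _ ?_ hpow
  filter_upwards [tendsto_norm_cocompact_atTop.eventually_gt_atTop 1] with x hx
  exact (hlarge x hx).1

open Filter in
lemma upperDensity_eq_top_of_iSup_measure_closedBall_eq_top (hn : 0 < n) {w : Pt n → ℝ}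
    (hwc : Continuous w) (hw : Tendsto w (cocompact (Pt n)) atTop) (s : ℝ) {ν : Measure (Pt n)}
    (hν : ∀ R > 0, ⨆ z, ν (Metric.closedBall z R) = ⊤) : upperDensity w s ν = ⊤ := by
  have : Nonempty (Fin n) := ⟨⟨0, hn⟩⟩
  simp only [upperDensity, iInf_eq_top]
  intro r hr
  obtain ⟨v, hv⟩ := (hw.eventually_ge_atTop r).exists
  set R := ‖v‖ + 1
  set c := pdiam w (Metric.closedBall 0 R)
  have hrc : ENNReal.ofReal r ≤ c := by
    have hvR : v ∈ Metric.closedBall 0 R := mem_closedBall_zero_iff.2 (by linarith)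
    exact (ofReal_le_ofReal (by simpa using hv)).trans
      (le_pdiam hvR (Metric.mem_closedBall_self (by positivity)))
  have hcs : c ^ s ≠ ⊤ := by
    have hc0 : c ≠ 0 := ((ofReal_pos.2 hr).trans_le hrc).ne'
    have hctop : c ≠ ⊤ := pdiam_closedBall_ne_top hwc 0 R
    simp [rpow_eq_top_iff, hc0, hctop]
  rw [eq_top_iff]
  calc ⊤ = (⨆ z, ν (Metric.closedBall z R)) / c ^ s := by
        rw [hν R (by positivity), top_div_of_ne_top hcs]
    _ = ⨆ z, ν (Metric.closedBall z R) / c ^ s := ENNReal.iSup_div _ _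
    _ ≤ _ := iSup_le fun z => by
        have hz : pdiam w (Metric.closedBall z R) = c := pdiam_closedBall z R
        refine le_iSup_of_le (Metric.closedBall z R) <| le_iSup_of_le (isCompact_closedBall z R) <|
          le_iSup_of_le (convex_closedBall z R) <| le_iSup_of_le (hz ▸ hrc) ?_
        rw [hz]

lemma mapp_mul (A B : Matrix (Fin n) (Fin n) ℝ) (x : Pt n) :
    mapp (A * B) x = mapp A (mapp B x) := by
  simp [mapp, Matrix.toLpLin_apply, Matrix.mulVec_mulVec]

lemma exists_norm_mapp_le (B : Matrix (Fin n) (Fin n) ℝ) :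
    ∃ C > 0, ∀ x, ‖mapp B x‖ ≤ C * ‖x‖ :=
  (LinearMap.toContinuousLinearMap (Matrix.toEuclideanLin B)).bound

section DigitExpansion

variable (A : Matrix (Fin n) (Fin n) ℝ) {D : Finset (Pt n)}

def digitSum {N : ℕ} (d : Fin N → D) : Pt n :=
  ∑ j : Fin N, mapp (A ^ (j : ℕ)) (d j : Pt n)

lemma digitSum_append {N M : ℕ} (u : Fin N → D) (v : Fin M → D) :
    digitSum A (Fin.append u v) = digitSum A u + mapp (A ^ N) (digitSum A v) := by
  simp only [digitSum, Fin.sum_univ_add, Fin.append_left, Fin.append_right, Fin.val_castAdd,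
    Fin.val_natAdd, pow_add, mapp_mul]
  simp only [mapp, map_sum]

lemma DsetM_eq_range (M : ℕ) : DsetM A D M = Set.range (digitSum A (D := D) (N := M)) := by
  ext x
  constructor
  · rintro ⟨d, hd, rfl⟩
    exact ⟨fun j => ⟨d j, hd j⟩, rfl⟩
  · rintro ⟨d, rfl⟩
    exact ⟨fun j => d j, fun j => (d j).2, rfl⟩

lemma DsetM_mono (hD0 : (0 : Pt n) ∈ D) {M M' : ℕ} (h : M ≤ M') :
    DsetM A D M ⊆ DsetM A D M' := by
  obtain ⟨K, rfl⟩ := Nat.exists_eq_add_of_le h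
  rw [DsetM_eq_range, DsetM_eq_range]
  rintro - ⟨d, rfl⟩
  refine ⟨Fin.append d fun _ => ⟨0, hD0⟩, ?_⟩
  rw [digitSum_append]
  simp [digitSum, mapp]

variable (D) in
def HasNearCoincidences : Prop :=
  ∀ ε > 0, ∃ (M : ℕ) (d d' : Fin M → D), d ≠ d' ∧ ‖digitSum A d - digitSum A d'‖ ≤ ε

lemma hasNearCoincidences_of_ncard_DsetM_lt {M : ℕ} (h : (DsetM A D M).ncard < D.card ^ M) :
    HasNearCoincidences A D := by
  have hninj : ¬ Function.Injective (digitSum A (D := D) (N := M)) := fun hinj => by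
    rw [DsetM_eq_range, ← Nat.card_coe_set_eq, Nat.card_range_of_injective hinj,
      Nat.card_eq_fintype_card, Fintype.card_fun, Fintype.card_coe, Fintype.card_fin] at h
    exact h.false
  obtain ⟨d, d', hdd', hne⟩ := Function.not_injective_iff.1 hninj
  exact fun ε hε => ⟨M, d, d', hne, by simpa [hdd'] using hε.le⟩

lemma hasNearCoincidences_of_not_uniformlyDiscrete (hD0 : (0 : Pt n) ∈ D)
    (h : ¬ UniformlyDiscrete (DsetInf A D)) : HasNearCoincidences A D := by
  intro ε hε
  simp only [UniformlyDiscrete, DsetInf, Set.mem_iUnion, not_exists, not_and, not_forall,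
    not_lt] at h
  obtain ⟨x, ⟨M₁, -, hx⟩, y, ⟨M₂, -, hy⟩, hxy, hclose⟩ := h ε hε
  obtain ⟨d, rfl⟩ := DsetM_eq_range A _ ▸ DsetM_mono A hD0 (le_max_left M₁ M₂) hx
  obtain ⟨d', rfl⟩ := DsetM_eq_range A _ ▸ DsetM_mono A hD0 (le_max_right M₁ M₂) hy
  exact ⟨_, d, d', fun hdd' => hxy (hdd' ▸ rfl), hclose⟩

/-- Appending to each of `2 ^ k` clustered strings one of two nearly coinciding strings
doubles the cluster; `A ^ N` only rescales the new error. -/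
lemma HasNearCoincidences.exists_two_pow_le_card (h : HasNearCoincidences A D) (k : ℕ) :
    ∀ ε > 0, ∃ (N : ℕ) (z : Pt n) (S : Finset (Fin N → D)),
      2 ^ k ≤ S.card ∧ ∀ d ∈ S, digitSum A d ∈ Metric.closedBall z ε := by
  classical
  induction k with
  | zero => exact fun ε hε => ⟨0, 0, {fun i => i.elim0}, by simp, by simp [digitSum, hε.le]⟩
  | succ k ih =>
    intro ε hε
    obtain ⟨N, z, S, hcard, hS⟩ := ih (ε / 2) (by positivity)
    obtain ⟨C, hC, hAN⟩ := exists_norm_mapp_le (A ^ N)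
    obtain ⟨M, t, t', htt', hclose⟩ := h (ε / (2 * C)) (by positivity)
    refine ⟨N + M, z + mapp (A ^ N) (digitSum A t),
      (S ×ˢ {t, t'}).image (Fin.appendEquiv N M), ?_, ?_⟩
    · rw [Finset.card_image_of_injective _ (Fin.appendEquiv N M).injective, Finset.card_product,
        Finset.card_pair htt', pow_succ]
      exact Nat.mul_le_mul_right 2 hcard
    · simp only [Finset.mem_image, Finset.mem_product, Finset.mem_insert, Finset.mem_singleton]
      rintro - ⟨⟨u, v⟩, ⟨hu, hv⟩, rfl⟩
      have hv : ‖mapp (A ^ N) (digitSum A v - digitSum A t)‖ ≤ ε / 2 := by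
        refine (hAN _).trans ?_
        rcases hv with rfl | rfl
        · simpa using (half_pos hε).le
        · rw [norm_sub_rev]
          calc C * _ ≤ C * (ε / (2 * C)) := by gcongr
            _ = ε / 2 := by field_simp
      rw [Metric.mem_closedBall, dist_eq_norm]
      change ‖digitSum A (Fin.append u v) - _‖ ≤ ε
      rw [digitSum_append]
      calc _ = ‖(digitSum A u - z) + mapp (A ^ N) (digitSum A v - digitSum A t)‖ := by
            simp only [mapp, map_sub]; abel_nf
        _ ≤ ε / 2 + ε / 2 := (norm_add_le _ _).trans
            (add_le_add (by simpa [dist_eq_norm] using hS u hu) hv)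
        _ = ε := add_halves ε

lemma natCast_card_le_muM {N : ℕ} (S : Finset (Fin N → D)) {W : Set (Pt n)}
    (hS : ∀ d ∈ S, digitSum A d ∈ W) : (S.card : ℝ≥0∞) ≤ muM A D N W := by
  rw [muM, Measure.coe_finsetSum, Finset.sum_apply, Finset.cast_card]
  calc ∑ _ ∈ S, (1 : ℝ≥0∞) ≤ ∑ d ∈ S, Measure.dirac (digitSum A d) W :=
        Finset.sum_le_sum fun d hd => (Measure.dirac_apply_of_mem (hS d hd)).ge
    _ ≤ _ := Finset.sum_le_sum_of_subset (Finset.subset_univ S)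

lemma iSup_measure_closedBall_eq_top {μ : Measure (Pt n)}
    (hμ : ∀ W : Set (Pt n), μ W = ⨆ M : ℕ, muM A D M W) (h : HasNearCoincidences A D)
    {R : ℝ} (hR : 0 < R) : ⨆ z, μ (Metric.closedBall z R) = ⊤ := by
  refine ENNReal.eq_top_of_forall_nnreal_le fun r => ?_
  obtain ⟨k, hk⟩ := exists_nat_gt r
  obtain ⟨N, z, S, hcard, hS⟩ := h.exists_two_pow_le_card A k R hR
  calc (r : ℝ≥0∞) ≤ k := by exact_mod_cast hk.le
    _ ≤ (2 ^ k : ℕ) := by exact_mod_cast Nat.lt_two_pow_self.le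
    _ ≤ S.card := by exact_mod_cast hcard
    _ ≤ muM A D N (Metric.closedBall z R) := natCast_card_le_muM A S hS
    _ ≤ μ (Metric.closedBall z R) := hμ _ ▸ le_iSup (fun M => muM A D M _) N
    _ ≤ ⨆ z, μ (Metric.closedBall z R) := le_iSup (fun z => μ (Metric.closedBall z R)) z

end DigitExpansion

theorem stmt18_general {n : ℕ} (hn : 0 < n) (A : Matrix (Fin n) (Fin n) ℝ)
    (w : Pt n → ℝ) (hw : IsPseudoNorm A w)
    (D : Finset (Pt n)) (hD0 : (0 : Pt n) ∈ D)
    (s : ℝ)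
    (μ : Measure (Pt n)) (hμ : ∀ W : Set (Pt n), μ W = ⨆ M : ℕ, muM A D M W)
    (h : (∃ M : ℕ, 1 ≤ M ∧ (DsetM A D M).ncard < D.card ^ M) ∨
      ¬ UniformlyDiscrete (DsetInf A D)) :
    upperDensity w s μ = ⊤ := by
  have hnear : HasNearCoincidences A D := by
    rcases h with ⟨M, -, hM⟩ | hud
    exacts [hasNearCoincidences_of_ncard_DsetM_lt A hM,
      hasNearCoincidences_of_not_uniformlyDiscrete A hD0 hud]
  exact upperDensity_eq_top_of_iSup_measure_closedBall_eq_top hn hw.continuous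
    hw.tendsto_cocompact_atTop s fun R hR => iSup_measure_closedBall_eq_top A hμ hnear hR

/-- If the expansions are not all distinct, or `𝒟_∞` is not uniformly discrete,
then the upper `s`-density of `μ` is infinite. -/
theorem stmt18 {n : ℕ} (hn : 0 < n) (A : Matrix (Fin n) (Fin n) ℝ)
    (hA : IsExpandingMatrix A)
    (hAnorm : ∀ x : Pt n, ‖x‖ ≤ ‖mapp A x‖)
    (hAeq : ∀ x : Pt n, ‖x‖ = ‖mapp A x‖ → x = 0)
    (w : Pt n → ℝ) (hw : IsPseudoNorm A w)
    (D : Finset (Pt n)) (hD0 : (0 : Pt n) ∈ D)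
    (K : Set (Pt n)) (hK : IsSelfAffineSet A D K)
    (s : ℝ) (hs : s = n * Real.log D.card / Real.log |A.det|)
    (μ : Measure (Pt n)) (hμ : ∀ W : Set (Pt n), μ W = ⨆ M : ℕ, muM A D M W)
    (h : (∃ M : ℕ, 1 ≤ M ∧ (DsetM A D M).ncard < D.card ^ M) ∨
      ¬ UniformlyDiscrete (DsetInf A D)) :
    upperDensity w s μ = ⊤ :=
  stmt18_general hn A w hw D hD0 s μ hμ h
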